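/- arXiv:1912.11718 — 4 statements merged into one kernel-verified Lean document; each statement's English description precedes it below -/
import Mathlib

section
/- Let b ∈ ℝ and Φ_t(u,r;v,ρ) := (u−v)² − (b/2)²(4r²ρ² − (r²+ρ²−t²)²). Define the Monge–Ampère matrix M(Φ_t) as the 3×3 matrix with rows (Φ_t, ∂_vΦ_t, ∂_ρΦ_t), (∂_uΦ_t, ∂²_{uv}Φ_t, ∂²_{uρ}Φ_t), (∂_rΦ_t, ∂²_{rv}Φ_t, ∂²_{rρ}Φ_t). Then for all (u,r,t,v,ρ) with Φ_t(u,r;v,ρ) = 0, det M(Φ_t) = 4b⁴·r·t²·ρ·(t² − r² − ρ²). -/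
/-!
Φ is symmetric under `u ↔ v` and under `r ↔ ρ`, so only `∂_u Φ` and `∂_r Φ` have to be computed.
Expanding the determinant along its sparse pattern and substituting
`(u - v)² = (b/2)² (4r²ρ² - (r² + ρ² - t²)²)`, which is the equation `Φ = 0`, gives the formula.
-/

/-- The defining function Φ(u,r,t;v,ρ) = (u−v)² − (b/2)²(4r²ρ² − (r²+ρ²−t²)²). -/
noncomputable def Phi (b u r t v ρ : ℝ) : ℝ :=
  (u - v) ^ 2 - (b / 2) ^ 2 * (4 * r ^ 2 * ρ ^ 2 - (r ^ 2 + ρ ^ 2 - t ^ 2) ^ 2)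

/-- ∂_u Φ -/
noncomputable def Pu (b u r t v ρ : ℝ) : ℝ := deriv (fun u' => Phi b u' r t v ρ) u
/-- ∂_r Φ -/
noncomputable def Pr (b u r t v ρ : ℝ) : ℝ := deriv (fun r' => Phi b u r' t v ρ) r
/-- ∂_t Φ -/
noncomputable def Pt (b u r t v ρ : ℝ) : ℝ := deriv (fun t' => Phi b u r t' v ρ) t
/-- ∂_v Φ -/
noncomputable def Pv (b u r t v ρ : ℝ) : ℝ := deriv (fun v' => Phi b u r t v' ρ) v
/-- ∂_ρ Φ -/
noncomputable def Pp (b u r t v ρ : ℝ) : ℝ := deriv (fun ρ' => Phi b u r t v ρ') ρ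
/-- ∂²_{uv} Φ -/
noncomputable def Puv (b u r t v ρ : ℝ) : ℝ := deriv (fun u' => Pv b u' r t v ρ) u
/-- ∂²_{uρ} Φ -/
noncomputable def Pup (b u r t v ρ : ℝ) : ℝ := deriv (fun u' => Pp b u' r t v ρ) u
/-- ∂²_{rv} Φ -/
noncomputable def Prv (b u r t v ρ : ℝ) : ℝ := deriv (fun r' => Pv b u r' t v ρ) r
/-- ∂²_{rρ} Φ -/
noncomputable def Prp (b u r t v ρ : ℝ) : ℝ := deriv (fun r' => Pp b u r' t v ρ) r
/-- ∂²_{tv} Φ -/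
noncomputable def Ptv (b u r t v ρ : ℝ) : ℝ := deriv (fun t' => Pv b u r t' v ρ) t
/-- ∂²_{tρ} Φ -/
noncomputable def Ptp (b u r t v ρ : ℝ) : ℝ := deriv (fun t' => Pp b u r t' v ρ) t
/-- ∂²_{vv} Φ -/
noncomputable def Pvv (b u r t v ρ : ℝ) : ℝ := deriv (fun v' => Pv b u r t v' ρ) v
/-- ∂²_{vρ} Φ -/
noncomputable def Pvp (b u r t v ρ : ℝ) : ℝ := deriv (fun v' => Pp b u r t v' ρ) v
/-- ∂²_{ρv} Φ -/
noncomputable def Ppv (b u r t v ρ : ℝ) : ℝ := deriv (fun ρ' => Pv b u r t v ρ') ρ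
/-- ∂²_{ρρ} Φ -/
noncomputable def Ppp (b u r t v ρ : ℝ) : ℝ := deriv (fun ρ' => Pp b u r t v ρ') ρ

theorem phi_swap_u_v (b u r t v ρ : ℝ) : Phi b u r t v ρ = Phi b v r t u ρ := by
  unfold Phi; ring

theorem phi_swap_r_ρ (b u r t v ρ : ℝ) : Phi b u r t v ρ = Phi b u ρ t v r := by
  unfold Phi; ring

theorem hasDerivAt_phi_u (b u r t v ρ : ℝ) :
    HasDerivAt (fun u' => Phi b u' r t v ρ) (2 * (u - v)) u :=
  (((hasDerivAt_id u).sub_const v).fun_pow 2 |>.sub_const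
    ((b / 2) ^ 2 * (4 * r ^ 2 * ρ ^ 2 - (r ^ 2 + ρ ^ 2 - t ^ 2) ^ 2))).congr_deriv (by simp)

theorem hasDerivAt_phi_r (b u r t v ρ : ℝ) :
    HasDerivAt (fun r' => Phi b u r' t v ρ) (-(b ^ 2) * r * (t ^ 2 - r ^ 2 + ρ ^ 2)) r := by
  have hsq : HasDerivAt (fun r' : ℝ => r' ^ 2) (2 * r) r := by simpa using hasDerivAt_pow 2 r
  exact ((((hsq.const_mul 4).mul_const (ρ ^ 2)).fun_sub
    (((hsq.add_const (ρ ^ 2)).sub_const (t ^ 2)).fun_pow 2)).const_mul ((b / 2) ^ 2)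
    |>.const_sub ((u - v) ^ 2)).congr_deriv (by ring)

theorem pu_eq (b u r t v ρ : ℝ) : Pu b u r t v ρ = 2 * (u - v) :=
  (hasDerivAt_phi_u b u r t v ρ).deriv

theorem pr_eq (b u r t v ρ : ℝ) : Pr b u r t v ρ = -(b ^ 2) * r * (t ^ 2 - r ^ 2 + ρ ^ 2) :=
  (hasDerivAt_phi_r b u r t v ρ).deriv

theorem pv_eq (b u r t v ρ : ℝ) : Pv b u r t v ρ = 2 * (v - u) := by
  simp only [Pv, phi_swap_u_v b u]
  exact pu_eq b v r t u ρ

theorem pp_eq (b u r t v ρ : ℝ) : Pp b u r t v ρ = -(b ^ 2) * ρ * (t ^ 2 - ρ ^ 2 + r ^ 2) := by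
  simp only [Pp, phi_swap_r_ρ b u r]
  exact pr_eq b u ρ t v r

theorem puv_eq (b u r t v ρ : ℝ) : Puv b u r t v ρ = -2 := by
  simp only [Puv, pv_eq]
  exact (((hasDerivAt_id u).const_sub v).const_mul 2).deriv.trans (by ring)

theorem pup_eq (b u r t v ρ : ℝ) : Pup b u r t v ρ = 0 := by
  simp only [Pup, pp_eq, deriv_const]

theorem prv_eq (b u r t v ρ : ℝ) : Prv b u r t v ρ = 0 := by
  simp only [Prv, pv_eq, deriv_const]

theorem prp_eq (b u r t v ρ : ℝ) : Prp b u r t v ρ = -(2 * b ^ 2 * r * ρ) := by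
  simp only [Prp, pp_eq]
  exact (((hasDerivAt_pow 2 r).const_add (t ^ 2 - ρ ^ 2)).const_mul (-(b ^ 2) * ρ)).deriv.trans
    (by ring)

/-- On the zero set of Φ_t, the determinant of the Monge–Ampère matrix
(the rotational curvature Rot(Φ_t)) equals 4b⁴rt²ρ(t²−r²−ρ²). -/
theorem statement5 (b u r t v ρ : ℝ) (hΦ : Phi b u r t v ρ = 0) :
    Matrix.det !![Phi b u r t v ρ, Pv b u r t v ρ, Pp b u r t v ρ;
                  Pu b u r t v ρ, Puv b u r t v ρ, Pup b u r t v ρ;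
                  Pr b u r t v ρ, Prv b u r t v ρ, Prp b u r t v ρ]
      = 4 * b ^ 4 * r * t ^ 2 * ρ * (t ^ 2 - r ^ 2 - ρ ^ 2) := by
  have huv : (u - v) ^ 2 = (b / 2) ^ 2 * (4 * r ^ 2 * ρ ^ 2 - (r ^ 2 + ρ ^ 2 - t ^ 2) ^ 2) := by
    unfold Phi at hΦ; linarith
  rw [hΦ, pu_eq, pv_eq, pp_eq, pr_eq, puv_eq, pup_eq, prv_eq, prp_eq, Matrix.det_fin_three]
  simp only [Matrix.of_apply, Matrix.cons_val', Matrix.cons_val_zero, Matrix.cons_val_one,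
    Matrix.cons_val, Matrix.cons_val_fin_one]
  linear_combination (-8 * b ^ 2 * r * ρ) * huv
end

section
/- With Φ as above and Rot(Φ_t) := det M(Φ_t) the rotational curvature, for all (u,r,t,v,ρ) with Φ(u,r,t;v,ρ) = 0 one has Rot(Φ_t)(u,r;v,ρ) = 4b²·r·t·ρ·∂_tΦ(u,r,t;v,ρ), where ∂_tΦ = b²t(t² − r² − ρ²). -/
/-!
The quartic part of Φ is symmetric in (r, ρ, t): Φ = (u − v)² + (b²/4)·H(r, ρ, t) with
H(x, y, z) = x⁴ + y⁴ + z⁴ − 2x²y² − 2x²z² − 2y²z², so all three radial derivatives are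
b²x(x² − y² − z²) for the appropriate ordering of the variables. The matrix has zeros in the
(u, ρ) and (r, v) slots, so its determinant is Φ·Φ_uv·Φ_rρ − Φ_v·Φ_u·Φ_rρ − Φ_ρ·Φ_uv·Φ_r. On
Φ = 0 one substitutes (u − v)² = −(b²/4)H, and the identity
H + t⁴ − (r² − ρ²)² = 2t²(t² − r² − ρ²) finishes the computation.
-/

/-- `heronForm x y z = -16 · (area of the triangle with sides x, y, z)²` by Heron's formula. -/
def heronForm (x y z : ℝ) : ℝ :=
  x ^ 4 + y ^ 4 + z ^ 4 - 2 * x ^ 2 * y ^ 2 - 2 * x ^ 2 * z ^ 2 - 2 * y ^ 2 * z ^ 2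

theorem heronForm_swap₁₂ (x y z : ℝ) : heronForm x y z = heronForm y x z := by
  unfold heronForm; ring

theorem heronForm_swap₁₃ (x y z : ℝ) : heronForm x y z = heronForm z y x := by
  unfold heronForm; ring

theorem hasDerivAt_heronForm (x y z : ℝ) :
    HasDerivAt (fun x => heronForm x y z) (4 * x * (x ^ 2 - y ^ 2 - z ^ 2)) x := by
  have h := ((hasDerivAt_pow 4 x).fun_sub
    ((hasDerivAt_pow 2 x).const_mul (2 * (y ^ 2 + z ^ 2)))).add_const ((y ^ 2 - z ^ 2) ^ 2)
  have hform : (fun x => heronForm x y z) =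
      fun x => x ^ 4 - 2 * (y ^ 2 + z ^ 2) * x ^ 2 + (y ^ 2 - z ^ 2) ^ 2 := by
    funext x; unfold heronForm; ring
  rw [hform]
  exact h.congr_deriv (by push_cast; ring)

theorem Phi_eq_heronForm (b u r t v ρ : ℝ) :
    Phi b u r t v ρ = (u - v) ^ 2 + b ^ 2 / 4 * heronForm r ρ t := by
  unfold Phi heronForm; ring

section Partials

variable (b u r t v ρ : ℝ)

theorem Pu_eq : Pu b u r t v ρ = 2 * (u - v) := by
  simp [Pu, Phi_eq_heronForm]

theorem Pv_eq : Pv b u r t v ρ = 2 * (v - u) := by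
  simp only [Pv, Phi_eq_heronForm]
  exact ((((hasDerivAt_id' v).const_sub u).pow 2).add_const _).deriv.trans (by push_cast; ring)

theorem Pr_eq : Pr b u r t v ρ = b ^ 2 * r * (r ^ 2 - ρ ^ 2 - t ^ 2) := by
  simp only [Pr, Phi_eq_heronForm]
  exact (((hasDerivAt_heronForm r ρ t).const_mul _).const_add _).deriv.trans (by ring)

theorem Pp_eq : Pp b u r t v ρ = b ^ 2 * ρ * (ρ ^ 2 - r ^ 2 - t ^ 2) := by
  simp only [Pp, Phi_eq_heronForm, heronForm_swap₁₂ r]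
  exact (((hasDerivAt_heronForm ρ r t).const_mul _).const_add _).deriv.trans (by ring)

theorem Pt_eq : Pt b u r t v ρ = b ^ 2 * t * (t ^ 2 - r ^ 2 - ρ ^ 2) := by
  simp only [Pt, Phi_eq_heronForm, heronForm_swap₁₃ r]
  exact (((hasDerivAt_heronForm t ρ r).const_mul _).const_add _).deriv.trans (by ring)

theorem Puv_eq : Puv b u r t v ρ = -2 := by
  simp [Puv, Pv_eq]

theorem Pup_eq : Pup b u r t v ρ = 0 := by
  simp [Pup, Pp_eq]

theorem Prv_eq : Prv b u r t v ρ = 0 := by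
  simp [Prv, Pv_eq]

theorem Prp_eq : Prp b u r t v ρ = -2 * b ^ 2 * r * ρ := by
  simp only [Prp, Pp_eq]
  exact ((((hasDerivAt_pow 2 r).const_sub (ρ ^ 2)).sub_const (t ^ 2)).const_mul
    (b ^ 2 * ρ)).deriv.trans (by push_cast; ring)

end Partials

/-- Key identity: on the zero set of Φ, the rotational curvature Rot(Φ_t)
equals 4b²rtρ·∂_tΦ. -/
theorem statement6 (b u r t v ρ : ℝ) (hΦ : Phi b u r t v ρ = 0) :
    Matrix.det !![Phi b u r t v ρ, Pv b u r t v ρ, Pp b u r t v ρ;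
                  Pu b u r t v ρ, Puv b u r t v ρ, Pup b u r t v ρ;
                  Pr b u r t v ρ, Prv b u r t v ρ, Prp b u r t v ρ]
      = 4 * b ^ 2 * r * t * ρ * Pt b u r t v ρ := by
  rw [Matrix.det_fin_three]
  simp only [Matrix.of_apply, Matrix.cons_val', Matrix.cons_val_zero, Matrix.cons_val_one,
    Matrix.cons_val_two, Matrix.head_cons, Matrix.tail_cons, Matrix.empty_val',
    Matrix.cons_val_fin_one, Matrix.head_fin_const]
  rw [Pu_eq, Pv_eq, Pp_eq, Pr_eq, Pt_eq, Puv_eq, Pup_eq, Prv_eq, Prp_eq, hΦ]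
  rw [Phi_eq_heronForm, heronForm] at hΦ
  linear_combination (-(8 * b ^ 2 * r * ρ)) * hΦ
end

section
/- Let ℘_{r,t}(s) := b⁴(s³ − 3(r²+t²)s² + 3(r²−t²)²s − (r²−t²)²(r²+t²)) for real parameters r, t and b ≠ 0. Then ℘_{r,t}((r−t)²) = −8b⁴r²t²(r−t)², and ℘_{r,t} is nonincreasing on the interval [(r−t)², (r+t)²]. Consequently, for all s in [(r−t)², (r+t)²], |℘_{r,t}(s)| ≥ 8b⁴r²t²(r−t)². -/
/-!
In the variable `u = s - (r² + t²)` the cubic becomes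
`b⁴ (u³ - 3 (2rt)² u - 8 r² t² (r² + t²))`, and the interval `[(r - t)², (r + t)²]` becomes
`[-2rt, 2rt]`. A depressed cubic `u³ - 3a²u` is nonincreasing on `[-a, a]`, since
`u² + uv + v² ≤ 3a²` there; the lower bound is then the value at the left endpoint `u = -2rt`.
-/

open Set

theorem antitoneOn_cube_sub_three_sq_mul (a : ℝ) :
    AntitoneOn (fun u : ℝ => u ^ 3 - 3 * a ^ 2 * u) (Icc (-a) a) := by
  intro u ⟨hua, hua'⟩ v ⟨hva, hva'⟩ huv
  have hu : u ^ 2 ≤ a ^ 2 := sq_le_sq' hua hua'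
  have hv : v ^ 2 ≤ a ^ 2 := sq_le_sq' hva hva'
  have huv_sq : u * v ≤ a ^ 2 := by nlinarith [sq_nonneg (u - v)]
  have hfactor : (v ^ 3 - 3 * a ^ 2 * v) - (u ^ 3 - 3 * a ^ 2 * u)
      = (v - u) * (u ^ 2 + u * v + v ^ 2 - 3 * a ^ 2) := by ring
  have : (v - u) * (u ^ 2 + u * v + v ^ 2 - 3 * a ^ 2) ≤ 0 :=
    mul_nonpos_of_nonneg_of_nonpos (sub_nonneg.mpr huv) (by linarith)
  show v ^ 3 - 3 * a ^ 2 * v ≤ u ^ 3 - 3 * a ^ 2 * u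
  linarith

/-- The cubic `℘_{r,t}`. -/
def curvatureCubic (b r t s : ℝ) : ℝ :=
  b ^ 4 * (s ^ 3 - 3 * (r ^ 2 + t ^ 2) * s ^ 2
    + 3 * (r ^ 2 - t ^ 2) ^ 2 * s - (r ^ 2 - t ^ 2) ^ 2 * (r ^ 2 + t ^ 2))

section curvatureCubic

variable (b r t : ℝ)

theorem curvatureCubic_eq_depressed (s : ℝ) :
    curvatureCubic b r t s = b ^ 4 * ((s - (r ^ 2 + t ^ 2)) ^ 3
      - 3 * (2 * r * t) ^ 2 * (s - (r ^ 2 + t ^ 2)) - 8 * r ^ 2 * t ^ 2 * (r ^ 2 + t ^ 2)) := by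
  unfold curvatureCubic; ring

theorem curvatureCubic_sub_sq :
    curvatureCubic b r t ((r - t) ^ 2) = -8 * b ^ 4 * r ^ 2 * t ^ 2 * (r - t) ^ 2 := by
  unfold curvatureCubic; ring

theorem antitoneOn_curvatureCubic :
    AntitoneOn (curvatureCubic b r t) (Icc ((r - t) ^ 2) ((r + t) ^ 2)) := by
  have shift_mem : ∀ s ∈ Icc ((r - t) ^ 2) ((r + t) ^ 2),
      s - (r ^ 2 + t ^ 2) ∈ Icc (-(2 * r * t)) (2 * r * t) := by
    intro s ⟨hs, hs'⟩
    constructor <;> nlinarith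
  intro x hx y hy hxy
  simp only [curvatureCubic_eq_depressed]
  gcongr b ^ 4 * (?_ - _)
  exact antitoneOn_cube_sub_three_sq_mul (2 * r * t) (shift_mem x hx) (shift_mem y hy)
    (by linarith)

theorem le_abs_curvatureCubic {s : ℝ} (hs : s ∈ Icc ((r - t) ^ 2) ((r + t) ^ 2)) :
    8 * b ^ 4 * r ^ 2 * t ^ 2 * (r - t) ^ 2 ≤ |curvatureCubic b r t s| := by
  have left_mem : (r - t) ^ 2 ∈ Icc ((r - t) ^ 2) ((r + t) ^ 2) := ⟨le_rfl, hs.1.trans hs.2⟩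
  have hle := antitoneOn_curvatureCubic b r t left_mem hs hs.1
  rw [curvatureCubic_sub_sq] at hle
  linarith [neg_abs_le (curvatureCubic b r t s)]

end curvatureCubic

theorem statement9_general (b r t : ℝ) :
    (fun s : ℝ => b ^ 4 * (s ^ 3 - 3 * (r ^ 2 + t ^ 2) * s ^ 2
        + 3 * (r ^ 2 - t ^ 2) ^ 2 * s - (r ^ 2 - t ^ 2) ^ 2 * (r ^ 2 + t ^ 2)))
        ((r - t) ^ 2)
      = -8 * b ^ 4 * r ^ 2 * t ^ 2 * (r - t) ^ 2 ∧
    AntitoneOn (fun s : ℝ => b ^ 4 * (s ^ 3 - 3 * (r ^ 2 + t ^ 2) * s ^ 2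
        + 3 * (r ^ 2 - t ^ 2) ^ 2 * s - (r ^ 2 - t ^ 2) ^ 2 * (r ^ 2 + t ^ 2)))
      (Set.Icc ((r - t) ^ 2) ((r + t) ^ 2)) ∧
    ∀ s ∈ Set.Icc ((r - t) ^ 2) ((r + t) ^ 2),
      8 * b ^ 4 * r ^ 2 * t ^ 2 * (r - t) ^ 2 ≤
        |b ^ 4 * (s ^ 3 - 3 * (r ^ 2 + t ^ 2) * s ^ 2
          + 3 * (r ^ 2 - t ^ 2) ^ 2 * s - (r ^ 2 - t ^ 2) ^ 2 * (r ^ 2 + t ^ 2))| :=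
  ⟨curvatureCubic_sub_sq b r t, antitoneOn_curvatureCubic b r t,
    fun _ hs => le_abs_curvatureCubic b r t hs⟩

/-- Properties of the cubic ℘_{r,t}(s) = b⁴(s³ − 3(r²+t²)s² + 3(r²−t²)²s − (r²−t²)²(r²+t²)):
value at (r−t)², monotonicity on [(r−t)², (r+t)²], and the resulting lower bound. -/
theorem statement9 (b r t : ℝ) (hb : b ≠ 0) (hr : 0 < r) (ht : 0 < t) :
    (fun s : ℝ => b ^ 4 * (s ^ 3 - 3 * (r ^ 2 + t ^ 2) * s ^ 2
        + 3 * (r ^ 2 - t ^ 2) ^ 2 * s - (r ^ 2 - t ^ 2) ^ 2 * (r ^ 2 + t ^ 2)))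
        ((r - t) ^ 2)
      = -8 * b ^ 4 * r ^ 2 * t ^ 2 * (r - t) ^ 2 ∧
    AntitoneOn (fun s : ℝ => b ^ 4 * (s ^ 3 - 3 * (r ^ 2 + t ^ 2) * s ^ 2
        + 3 * (r ^ 2 - t ^ 2) ^ 2 * s - (r ^ 2 - t ^ 2) ^ 2 * (r ^ 2 + t ^ 2)))
      (Set.Icc ((r - t) ^ 2) ((r + t) ^ 2)) ∧
    ∀ s ∈ Set.Icc ((r - t) ^ 2) ((r + t) ^ 2),
      8 * b ^ 4 * r ^ 2 * t ^ 2 * (r - t) ^ 2 ≤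
        |b ^ 4 * (s ^ 3 - 3 * (r ^ 2 + t ^ 2) * s ^ 2
          + 3 * (r ^ 2 - t ^ 2) ^ 2 * s - (r ^ 2 - t ^ 2) ^ 2 * (r ^ 2 + t ^ 2))| :=
  statement9_general b r t
end

section
/- Let 1 ≤ p < ∞, I ⊂ ℝ a compact interval, and F : ℝ^d × I → ℝ measurable, with F(x,·) ∈ C¹(I) for a.e. x, and F, ∂_t F ∈ L^p(ℝ^d × I). Then for every t₀ ∈ I: ∫_{ℝ^d} sup_{t ∈ I}|F(x,t)|^p dx ≤ ∫_{ℝ^d}|F(x,t₀)|^p dx + p·‖F‖_{L^p(ℝ^d×I)}^{p−1}·‖∂_t F‖_{L^p(ℝ^d×I)}. -/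
/-!
For fixed `x`, the derivative of `t ↦ |F x t| ^ p` is bounded by `p |F x t| ^ (p - 1) |∂ₜ F x t|`,
so the fundamental theorem of calculus gives, for every `s ∈ I`,
`|F x s| ^ p ≤ |F x t₀| ^ p + p ∫_I |F x t| ^ (p - 1) |∂ₜ F x t| dt`
(for `p = 1`, where `|·|` is not differentiable, use `|g s| - |g t₀| ≤ |g s - g t₀|` instead).
Taking the supremum over `s`, integrating in `x`, and applying Hölder's inequality on `ℝ^d × I`
with exponents `p / (p - 1)` and `p` to the last term gives the claim.
-/

open MeasureTheory Set Filter

section Holder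

variable {α : Type*} [MeasurableSpace α] {μ : Measure α} {p : ℝ} {u v : α → ℝ}

lemma integrable_abs_rpow_iff_memLp {f : α → ℝ} (hp : 0 < p) (hf : AEStronglyMeasurable f μ) :
    Integrable (fun x => |f x| ^ p) μ ↔ MemLp f (ENNReal.ofReal p) μ := by
  rw [← integrable_norm_rpow_iff hf (by simpa using hp) ENNReal.ofReal_ne_top,
    ENNReal.toReal_ofReal hp.le]
  simp only [Real.norm_eq_abs]

lemma memLp_rpow_sub_one (hp : 1 < p) (hu0 : ∀ x, 0 ≤ u x) (hu : MemLp u (ENNReal.ofReal p) μ) :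
    MemLp (fun x => u x ^ (p - 1)) (ENNReal.ofReal (p / (p - 1))) μ := by
  have hp1 : 0 < p - 1 := sub_pos.2 hp
  refine (integrable_abs_rpow_iff_memLp (div_pos (by linarith) hp1)
    ((Real.continuous_rpow_const hp1.le).comp_aestronglyMeasurable hu.1)).1 ?_
  refine ((integrable_abs_rpow_iff_memLp (by linarith) hu.1).2 hu).congr (ae_of_all _ fun x => ?_)
  dsimp only
  rw [abs_of_nonneg (hu0 x), abs_of_nonneg (Real.rpow_nonneg (hu0 x) _), ← Real.rpow_mul (hu0 x),
    mul_div_cancel₀ _ hp1.ne']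

lemma integrable_rpow_sub_one_mul (hp : 1 ≤ p) (hu0 : ∀ x, 0 ≤ u x)
    (hu : MemLp u (ENNReal.ofReal p) μ) (hv : MemLp v (ENNReal.ofReal p) μ) :
    Integrable (fun x => u x ^ (p - 1) * v x) μ := by
  rcases hp.eq_or_lt with rfl | hp
  · simpa using memLp_one_iff_integrable.1 (by simpa using hv)
  · have : ENNReal.HolderConjugate (ENNReal.ofReal (p / (p - 1))) (ENNReal.ofReal p) :=
      (Real.HolderConjugate.conjExponent hp).symm.ennrealOfReal
    exact (memLp_rpow_sub_one hp hu0 hu).integrable_mul hv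

lemma integral_rpow_sub_one_mul_le (hp : 1 ≤ p) (hu0 : ∀ x, 0 ≤ u x) (hv0 : ∀ x, 0 ≤ v x)
    (hu : MemLp u (ENNReal.ofReal p) μ) (hv : MemLp v (ENNReal.ofReal p) μ) :
    ∫ x, u x ^ (p - 1) * v x ∂μ
      ≤ (∫ x, u x ^ p ∂μ) ^ ((p - 1) / p) * (∫ x, v x ^ p ∂μ) ^ (1 / p) := by
  rcases hp.eq_or_lt with rfl | hp
  · simp
  · have key := integral_mul_le_Lp_mul_Lq_of_nonneg (Real.HolderConjugate.conjExponent hp).symm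
      (ae_of_all _ fun x => Real.rpow_nonneg (hu0 x) _) (ae_of_all _ hv0)
      (memLp_rpow_sub_one hp hu0 hu) hv
    have hp1 : p - 1 ≠ 0 := (sub_pos.2 hp).ne'
    have hpow : ∀ x, (u x ^ (p - 1)) ^ (p / (p - 1)) = u x ^ p := fun x => by
      rw [← Real.rpow_mul (hu0 x), mul_div_cancel₀ _ hp1]
    simpa only [Real.conjExponent, hpow, one_div_div] using key

end Holder

section OneDim

variable {a b : ℝ}

lemma sub_le_setIntegral_Icc_of_deriv_le {h h' φ : ℝ → ℝ}
    (hh : ∀ t ∈ Icc a b, HasDerivWithinAt h (h' t) (Icc a b) t)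
    (hφ : IntegrableOn φ (Icc a b)) (hφ0 : ∀ t ∈ Icc a b, 0 ≤ φ t)
    (hh'φ : ∀ t ∈ Icc a b, h' t ≤ φ t) {c d : ℝ} (hc : c ∈ Icc a b) (hd : d ∈ Icc a b)
    (hcd : c ≤ d) :
    h d - h c ≤ ∫ t in Icc a b, φ t := by
  have hsub : Icc c d ⊆ Icc a b := Icc_subset_Icc hc.1 hd.2
  have hIoo : ∀ t ∈ Ioo c d, t ∈ Ioo a b := fun t ht => Ioo_subset_Ioo hc.1 hd.2 ht
  calc h d - h c ≤ ∫ t in c..d, φ t :=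
        intervalIntegral.sub_le_integral_of_hasDeriv_right_of_le hcd
          (fun t ht => (hh t (hsub ht)).continuousWithinAt.mono hsub)
          (fun t ht => ((hh t (Ioo_subset_Icc_self (hIoo t ht))).hasDerivAt
            (Icc_mem_nhds (hIoo t ht).1 (hIoo t ht).2)).hasDerivWithinAt)
          (hφ.mono_set hsub) (fun t ht => hh'φ t (Ioo_subset_Icc_self (hIoo t ht)))
    _ = ∫ t in Ioc c d, φ t := intervalIntegral.integral_of_le hcd
    _ ≤ ∫ t in Icc a b, φ t :=
        setIntegral_mono_set hφ ((ae_restrict_iff' measurableSet_Icc).2 (ae_of_all _ hφ0))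
          (Ioc_subset_Icc_self.trans hsub).eventuallyLE

lemma sub_le_setIntegral_Icc_of_abs_deriv_le {h h' φ : ℝ → ℝ}
    (hh : ∀ t ∈ Icc a b, HasDerivWithinAt h (h' t) (Icc a b) t)
    (hφ : IntegrableOn φ (Icc a b)) (hh'φ : ∀ t ∈ Icc a b, |h' t| ≤ φ t) {c d : ℝ}
    (hc : c ∈ Icc a b) (hd : d ∈ Icc a b) :
    h d - h c ≤ ∫ t in Icc a b, φ t := by
  have hφ0 : ∀ t ∈ Icc a b, 0 ≤ φ t := fun t ht => (abs_nonneg _).trans (hh'φ t ht)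
  rcases le_total c d with hcd | hdc
  · exact sub_le_setIntegral_Icc_of_deriv_le hh hφ hφ0
      (fun t ht => (le_abs_self _).trans (hh'φ t ht)) hc hd hcd
  · have := sub_le_setIntegral_Icc_of_deriv_le (h := fun t => -h t) (fun t ht => (hh t ht).neg)
      hφ hφ0 (fun t ht => (neg_le_abs _).trans (hh'φ t ht)) hd hc hdc
    linarith

lemma abs_rpow_le_add_integral {p : ℝ} (hp : 1 ≤ p) {g g' : ℝ → ℝ}
    (hg : ∀ t ∈ Icc a b, HasDerivWithinAt g (g' t) (Icc a b) t)
    (hg' : ContinuousOn g' (Icc a b)) {t₀ s : ℝ} (ht₀ : t₀ ∈ Icc a b) (hs : s ∈ Icc a b) :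
    |g s| ^ p ≤ |g t₀| ^ p + p * ∫ t in Icc a b, |g t| ^ (p - 1) * |g' t| := by
  have hgc : ContinuousOn g (Icc a b) := fun t ht => (hg t ht).continuousWithinAt
  rcases hp.eq_or_lt with rfl | hp
  · have hg'int : IntegrableOn (fun t => |g' t|) (Icc a b) := hg'.abs.integrableOn_Icc
    have hdiff : |g s - g t₀| ≤ ∫ t in Icc a b, |g' t| := abs_sub_le_iff.2
      ⟨sub_le_setIntegral_Icc_of_abs_deriv_le hg hg'int (fun _ _ => le_rfl) ht₀ hs,
        sub_le_setIntegral_Icc_of_abs_deriv_le hg hg'int (fun _ _ => le_rfl) hs ht₀⟩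
    simp only [Real.rpow_one, sub_self, Real.rpow_zero, one_mul]
    linarith [abs_sub_abs_le_abs_sub (g s) (g t₀)]
  · have hp1 : p - 2 + 1 ≠ 0 := by linarith
    have hderiv_abs : ∀ t, |p * |g t| ^ (p - 2) * g t * g' t| = p * (|g t| ^ (p - 1) * |g' t|) :=
      fun t => by
        rw [abs_mul, abs_mul, abs_mul, abs_of_pos (by linarith : 0 < p), abs_of_nonneg
          (Real.rpow_nonneg (abs_nonneg _) _), show p - 1 = p - 2 + 1 by ring,
          Real.rpow_add' (abs_nonneg _) hp1, Real.rpow_one]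
        ring
    have hφ : IntegrableOn (fun t => p * (|g t| ^ (p - 1) * |g' t|)) (Icc a b) :=
      (continuousOn_const.mul ((hgc.abs.rpow_const fun _ _ => Or.inr (by linarith)).mul
        hg'.abs)).integrableOn_Icc
    have key := sub_le_setIntegral_Icc_of_abs_deriv_le (h := fun t => |g t| ^ p)
      (fun t ht => (hasDerivAt_abs_rpow (g t) hp).comp_hasDerivWithinAt t (hg t ht)) hφ
      (fun t _ => (hderiv_abs t).le) ht₀ hs
    rw [integral_const_mul] at key
    linarith

end OneDim

section Prod

variable {α β : Type*} [MeasurableSpace α] [MeasurableSpace β] {μ : Measure α} {ν : Measure β}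
  [SFinite ν] {p : ℝ} {f g : α → β → ℝ}

lemma integrable_integral_abs_rpow_sub_one_mul (hp : 1 ≤ p)
    (hf : MemLp (Function.uncurry f) (ENNReal.ofReal p) (μ.prod ν))
    (hg : MemLp (Function.uncurry g) (ENNReal.ofReal p) (μ.prod ν)) :
    Integrable (fun x => ∫ y, |f x y| ^ (p - 1) * |g x y| ∂ν) μ :=
  (integrable_rpow_sub_one_mul hp (fun _ => abs_nonneg _) hf.abs hg.abs).integral_prod_left

lemma integral_integral_abs_rpow_sub_one_mul_le [SFinite μ] (hp : 1 ≤ p)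
    (hf : MemLp (Function.uncurry f) (ENNReal.ofReal p) (μ.prod ν))
    (hg : MemLp (Function.uncurry g) (ENNReal.ofReal p) (μ.prod ν)) :
    ∫ x, ∫ y, |f x y| ^ (p - 1) * |g x y| ∂ν ∂μ
      ≤ (∫ x, ∫ y, |f x y| ^ p ∂ν ∂μ) ^ ((p - 1) / p)
        * (∫ x, ∫ y, |g x y| ^ p ∂ν ∂μ) ^ (1 / p) := by
  have hp0 : 0 < p := by linarith
  have key := integral_rpow_sub_one_mul_le hp (fun _ => abs_nonneg _) (fun _ => abs_nonneg _)
    hf.abs hg.abs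
  have hfg : Integrable (fun z => |Function.uncurry f z| ^ (p - 1) * |Function.uncurry g z|)
      (μ.prod ν) :=
    integrable_rpow_sub_one_mul hp (fun _ => abs_nonneg _) hf.abs hg.abs
  rwa [integral_prod _ hfg, integral_prod _ ((integrable_abs_rpow_iff_memLp hp0 hf.1).2 hf),
    integral_prod _ ((integrable_abs_rpow_iff_memLp hp0 hg.1).2 hg)] at key

end Prod

theorem le_ciSup₂_of_forall_le {ι α : Type*} [ConditionallyCompleteLattice α] {s : Set ι}
    {f : ι → α} {M : α} (hf : ∀ t ∈ s, f t ≤ M) {t₀ : ι} (ht₀ : t₀ ∈ s) : f t₀ ≤ ⨆ t ∈ s, f t :=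
  le_ciSup₂ (f := fun t (_ : t ∈ s) => f t)
    ⟨M, by rintro _ ⟨_, ⟨t, rfl⟩, ⟨ht, rfl⟩⟩; exact hf t ht⟩ t₀ ht₀

/-- Sobolev embedding lemma for maximal functions:
∫ sup_{t∈I}|F(x,t)|^p dx ≤ ∫|F(x,t₀)|^p dx + p‖F‖_{L^p(ℝ^d×I)}^{p−1}‖∂_tF‖_{L^p(ℝ^d×I)}. -/
theorem statement14 (d : ℕ) (p : ℝ) (hp : 1 ≤ p) (a b t₀ : ℝ) (ht₀ : t₀ ∈ Set.Icc a b)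
    (F F' : (Fin d → ℝ) → ℝ → ℝ)
    (hmeas : StronglyMeasurable (Function.uncurry F))
    (hC1 : ∀ᵐ x ∂(volume : Measure (Fin d → ℝ)),
      (∀ t ∈ Set.Icc a b, HasDerivWithinAt (F x) (F' x t) (Set.Icc a b) t) ∧
        ContinuousOn (F' x) (Set.Icc a b))
    (hF : MemLp (Function.uncurry F) (ENNReal.ofReal p)
      ((volume : Measure (Fin d → ℝ)).prod (volume.restrict (Set.Icc a b))))
    (hF' : MemLp (Function.uncurry F') (ENNReal.ofReal p)
      ((volume : Measure (Fin d → ℝ)).prod (volume.restrict (Set.Icc a b)))) :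
    ∫ x : Fin d → ℝ, (⨆ t ∈ Set.Icc a b, |F x t| ^ p)
      ≤ (∫ x : Fin d → ℝ, |F x t₀| ^ p) +
        p * ((∫ x : Fin d → ℝ, ∫ t in Set.Icc a b, |F x t| ^ p) ^ ((p - 1) / p)) *
          ((∫ x : Fin d → ℝ, ∫ t in Set.Icc a b, |F' x t| ^ p) ^ (1 / p)) := by
  set C : (Fin d → ℝ) → ℝ := fun x => ∫ t in Set.Icc a b, |F x t| ^ (p - 1) * |F' x t|
  have hbound : ∀ᵐ x, ∀ s ∈ Set.Icc a b, |F x s| ^ p ≤ |F x t₀| ^ p + p * C x := by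
    filter_upwards [hC1] with x ⟨hder, hcont⟩ s hs
    exact abs_rpow_le_add_integral hp hder hcont ht₀ hs
  -- Otherwise the left-hand side is `0` by the convention for non-integrable functions.
  by_cases hS : Integrable (fun x => ⨆ t ∈ Set.Icc a b, |F x t| ^ p)
  swap
  · rw [integral_undef hS]
    positivity
  have hCint : Integrable C := integrable_integral_abs_rpow_sub_one_mul hp hF hF'
  have hF₀ : Integrable (fun x => |F x t₀| ^ p) := by
    refine hS.mono' ?_ (hbound.mono fun x hx => ?_)
    · exact ((hmeas.measurable.comp (measurable_id.prodMk measurable_const)).abs.pow_const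
        p).aestronglyMeasurable
    · rw [Real.norm_of_nonneg (by positivity)]
      exact le_ciSup₂_of_forall_le hx ht₀
  calc ∫ x, ⨆ t ∈ Set.Icc a b, |F x t| ^ p
      ≤ ∫ x, |F x t₀| ^ p + p * C x :=
        integral_mono_ae hS (hF₀.add (hCint.const_mul p)) (hbound.mono fun x hx =>
          Real.iSup_le (fun t => Real.iSup_le (hx t) (by positivity)) (by positivity))
    _ = (∫ x, |F x t₀| ^ p) + p * ∫ x, C x := by
        rw [integral_add hF₀ (hCint.const_mul p), integral_const_mul]
    _ ≤ _ := by
        rw [mul_assoc]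
        gcongr
        exact integral_integral_abs_rpow_sub_one_mul_le hp hF hF'
end
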